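/- Fix d ≥ 2 and δ ∈ (0,1). Let {v_1, …, v_n} be a δ-net of S^{d-1}, for each j let P_j = {x ∈ ℝ^d : ‖x‖ ≤ 1, x·v_j > 1 − δ²/8} with common volume V = Vol(P_1), let K_0 = B_d \ ∪_{j=1}^n P_j, and for x ∈ {0,1}^n let K_x = K_0 ∪ ∪_{j : x_j = 1} P_j. Let Γ_d = Vol(B_d), and let ε, ε' > 0 satisfy n·V ≥ 8ε'·Γ_d. If Ṽ ∈ ℝ satisfies |Ṽ − Vol(K_x)| ≤ ε·Γ_d and we set w = (Ṽ − Vol(K_0))/V, then |w − |x|| ≤ nε/(8ε'), where |x| denotes the Hamming weight of x. -/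
import Mathlib


open Metric Set MeasureTheory
open scoped RealInnerProductSpace

noncomputable section

/-- `N` is a `δ`-net of `S`. -/
def IsNet {d : ℕ} (δ : ℝ) (N S : Set (EuclideanSpace ℝ (Fin d))) : Prop :=
  N ⊆ S ∧ (∀ v ∈ N, ∀ w ∈ N, v ≠ w → δ ≤ dist v w) ∧ ∀ v ∈ S, ∃ w ∈ N, dist v w ≤ δ

/-- The spherical cap of radius `δ/2` around `v`: `{x : ‖x‖ ≤ 1, ⟪x, v⟫ > 1 - δ²/8}`. -/
def cap {d : ℕ} (δ : ℝ) (v : EuclideanSpace ℝ (Fin d)) : Set (EuclideanSpace ℝ (Fin d)) :=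
  {x | ‖x‖ ≤ 1 ∧ 1 - δ ^ 2 / 8 < ⟪x, v⟫}

/-- The unit ball with all the caps removed. -/
def capBase {d n : ℕ} (δ : ℝ) (v : Fin n → EuclideanSpace ℝ (Fin d)) :
    Set (EuclideanSpace ℝ (Fin d)) :=
  closedBall 0 1 \ ⋃ j, cap δ (v j)

/-- The convex body `K_x` associated to a bitstring `x`. -/
def capBody {d n : ℕ} (δ : ℝ) (v : Fin n → EuclideanSpace ℝ (Fin d)) (x : Fin n → Bool) :
    Set (EuclideanSpace ℝ (Fin d)) :=
  capBase δ v ∪ ⋃ j ∈ {j | x j = true}, cap δ (v j)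

lemma cap_subset_ball {d : ℕ} (δ : ℝ) (v : EuclideanSpace ℝ (Fin d)) :
    cap δ v ⊆ closedBall 0 1 := fun x hx => mem_closedBall_zero_iff.mpr hx.1

lemma cap_measurable {d : ℕ} (δ : ℝ) (v : EuclideanSpace ℝ (Fin d)) :
    MeasurableSet (cap δ v) := by
  have : cap δ v = closedBall 0 1 ∩ {x | 1 - δ ^ 2 / 8 < ⟪x, v⟫} := by
    ext y; simp [cap, mem_closedBall_zero_iff, and_comm]
  rw [this]
  exact measurableSet_closedBall.inter
    ((isOpen_lt continuous_const (continuous_id.inner continuous_const)).measurableSet)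

lemma cap_disjoint {d n : ℕ} (δ : ℝ) (hδ0 : 0 < δ)
    (v : Fin n → EuclideanSpace ℝ (Fin d)) (hinj : Function.Injective v)
    (hnet : IsNet δ (Set.range v) (sphere (0 : EuclideanSpace ℝ (Fin d)) 1))
    {j k : Fin n} (hjk : j ≠ k) : Disjoint (cap δ (v j)) (cap δ (v k)) := by
  rw [Set.disjoint_left]
  rintro y ⟨hy1, hy2⟩ ⟨_, hy3⟩
  have hsep : δ ≤ dist (v j) (v k) :=
    hnet.2.1 _ ⟨j, rfl⟩ _ ⟨k, rfl⟩ (fun h => hjk (hinj h))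
  have hnj : ‖v j‖ = 1 := mem_sphere_zero_iff_norm.mp (hnet.1 ⟨j, rfl⟩)
  have hnk : ‖v k‖ = 1 := mem_sphere_zero_iff_norm.mp (hnet.1 ⟨k, rfl⟩)
  have e1 : ‖v j - y‖ ^ 2 = ‖v j‖ ^ 2 - 2 * ⟪v j, y⟫ + ‖y‖ ^ 2 := norm_sub_sq_real _ _
  have e2 : ‖v k - y‖ ^ 2 = ‖v k‖ ^ 2 - 2 * ⟪v k, y⟫ + ‖y‖ ^ 2 := norm_sub_sq_real _ _
  rw [real_inner_comm] at e1 e2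
  have hj' : ‖v j - y‖ < δ / 2 := by
    nlinarith [norm_nonneg (v j - y), norm_nonneg y]
  have hk' : ‖v k - y‖ < δ / 2 := by
    nlinarith [norm_nonneg (v k - y), norm_nonneg y]
  have htri : dist (v j) (v k) ≤ dist (v j) y + dist y (v k) := dist_triangle _ _ _
  rw [dist_eq_norm] at hsep
  rw [dist_eq_norm, dist_comm y (v k), dist_eq_norm, dist_eq_norm] at htri
  linarith

/-- If `n·V ≥ 8ε'·Γ_d` and `Ṽ` estimates `Vol(K_x)` up to `ε·Γ_d`, then
`w = (Ṽ - Vol(K_0))/V` estimates the Hamming weight `|x|` up to `nε/(8ε')`. -/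
theorem volume_estimation_decodes_hamming_weight (d : ℕ) (hd : 2 ≤ d)
    (δ : ℝ) (hδ0 : 0 < δ) (hδ1 : δ < 1)
    (n : ℕ) (v : Fin n → EuclideanSpace ℝ (Fin d)) (hinj : Function.Injective v)
    (hnet : IsNet δ (Set.range v) (sphere (0 : EuclideanSpace ℝ (Fin d)) 1))
    (V : ℝ) (hV : ∀ j, (volume (cap δ (v j))).toReal = V)
    (ε ε' : ℝ) (hε : 0 < ε) (hε' : 0 < ε')
    (hnV : 8 * ε' * (volume (closedBall (0 : EuclideanSpace ℝ (Fin d)) 1)).toReal ≤ n * V)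
    (x : Fin n → Bool) (Vt : ℝ)
    (hVt : |Vt - (volume (capBody δ v x)).toReal| ≤
      ε * (volume (closedBall (0 : EuclideanSpace ℝ (Fin d)) 1)).toReal)
    (w : ℝ) (hw : w = (Vt - (volume (capBase δ v)).toReal) / V) :
    |w - ((Finset.univ.filter fun j => x j = true).card : ℝ)| ≤ n * ε / (8 * ε') := by
  set Γ := (volume (closedBall (0 : EuclideanSpace ℝ (Fin d)) 1)).toReal with hΓ
  have hΓpos : 0 < Γ :=
    ENNReal.toReal_pos (measure_closedBall_pos volume _ one_pos).ne'
      measure_closedBall_lt_top.ne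
  set S := Finset.univ.filter fun j => x j = true with hS
  have hUeq : (⋃ j ∈ {j | x j = true}, cap δ (v j)) = ⋃ j ∈ (S : Set (Fin n)), cap δ (v j) := by
    congr 1; ext j; simp [hS]
  have hfin : ∀ j : Fin n, volume (cap δ (v j)) < ⊤ := fun j =>
    lt_of_le_of_lt (measure_mono (cap_subset_ball δ (v j))) measure_closedBall_lt_top
  have hK0fin : volume (capBase δ v) < ⊤ :=
    lt_of_le_of_lt (measure_mono Set.diff_subset) measure_closedBall_lt_top
  have hdisjK0 : Disjoint (capBase δ v) (⋃ j ∈ (S : Set (Fin n)), cap δ (v j)) := by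
    rw [Set.disjoint_left]
    rintro y hy hy2
    simp only [Set.mem_iUnion] at hy2
    obtain ⟨j, _, hj⟩ := hy2
    exact hy.2 (Set.mem_iUnion.mpr ⟨j, hj⟩)
  have hsum : volume (⋃ j ∈ (S : Set (Fin n)), cap δ (v j)) = ∑ j ∈ S, volume (cap δ (v j)) := by
    rw [Finset.set_biUnion_coe]
    exact measure_biUnion_finset
      (fun j _ k _ hjk => cap_disjoint δ hδ0 v hinj hnet hjk)
      (fun j _ => cap_measurable δ (v j))
  have h1 : volume (capBody δ v x)
      = volume (capBase δ v) + ∑ j ∈ S, volume (cap δ (v j)) := by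
    rw [capBody, hUeq, measure_union hdisjK0
      (Finset.set_biUnion_coe S _ ▸ MeasurableSet.biUnion S.countable_toSet
        (fun j _ => cap_measurable δ (v j))), hsum]
  have h2 : (volume (capBody δ v x)).toReal
      = (volume (capBase δ v)).toReal + (S.card : ℝ) * V := by
    rw [h1, ENNReal.toReal_add hK0fin.ne (by
      rw [← hsum]; exact (lt_of_le_of_lt (measure_mono (by
        intro y hy; simp only [Set.mem_iUnion] at hy; obtain ⟨j, _, hj⟩ := hy
        exact cap_subset_ball δ (v j) hj)) measure_closedBall_lt_top).ne)]
    congr 1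
    rw [ENNReal.toReal_sum (fun j _ => (hfin j).ne)]
    simp [hV, mul_comm]
  -- positivity of V and n
  have hnpos : 0 < (n : ℝ) * V := lt_of_lt_of_le (by positivity) hnV
  have hVnonneg : 0 ≤ V := by
    rcases Nat.eq_zero_or_pos n with h | h
    · exfalso; rw [h] at hnpos; simp at hnpos
    · rw [← hV ⟨0, h⟩]; exact ENNReal.toReal_nonneg
  have hVpos : 0 < V := by
    rcases eq_or_lt_of_le hVnonneg with h | h
    · exfalso; rw [← h] at hnpos; simp at hnpos
    · exact h
  have hcard : (S.card : ℝ) ≤ n := by have := S.card_le_univ; simp at this; exact_mod_cast this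
  have key : w - (S.card : ℝ) = (Vt - (volume (capBody δ v x)).toReal) / V := by
    rw [hw, h2]; field_simp; ring
  rw [key, abs_div, abs_of_pos hVpos]
  rw [div_le_div_iff₀ hVpos (by positivity)]
  calc |Vt - (volume (capBody δ v x)).toReal| * (8 * ε') ≤ ε * Γ * (8 * ε') := by
        apply mul_le_mul_of_nonneg_right hVt (by positivity)
    _ ≤ (n : ℝ) * ε * V := by nlinarith
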